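/- arXiv:math/0311205 — 7 statements merged into one kernel-verified Lean document; each statement's English description precedes it below -/
import Mathlib

section
/- Let j ≥ 0 and r ≥ 1 be integers, let α = (1+√5)/2, β = (1−√5)/2, let F_n denote the Fibonacci numbers and L_n the Lucas numbers. Then F_{j+1}^{(r)} = Σ_{k=0, r+k ≡ 0 (mod 2)}^{r−1} C(r+k−1, k) · C(r−k+j−1, j) · L_{r−k+j} / 5^{(k+r)/2} + Σ_{k=0, r+k ≡ 1 (mod 2)}^{r−1} C(r+k−1, k) · C(r−k+j−1, j) · F_{r−k+j} / 5^{(k+r−1)/2}, where the equality holds in ℚ. -/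
/-
Since `1 - z - z² = (1 - φz)(1 - ψz)`, everything follows from a partial fraction decomposition
of `((1 - φz)(1 - ψz))^{-r}`. It comes from the polynomial identity
`(1 - u)^r ∑_{k<r} C(r-1+k, k) u^k + u^r ∑_{k<r} C(r-1+k, k) (1 - u)^k = 1`
at `u = -ψ/√5 · (1 - φz)`, for which `1 - u = φ/√5 · (1 - ψz)`. Multiplying it by
`((1 - φz)(1 - ψz))^{-r}` leaves only powers `(1 - φz)^{-(r-k)}` and `(1 - ψz)^{-(r-k)}`, whose
coefficients are binomial. Because `φψ = -1`, the two contributions to `z^j` for each `k` combine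
into `(φ^n + (-1)^{r-k} ψ^n) / √5^{r+k}` with `n = r - k + j`: a Lucas number over `5^{(r+k)/2}`
when `r + k` is even and, by Binet, a Fibonacci number over `5^{(r+k-1)/2}` when it is odd.
-/

/-- `convFib r m` is the convolved Fibonacci number `F_{m+1}^{(r)}`, the coefficient of
`z^m` in `(1 - z - z^2)^{-r}`, given by `∑_{j_1+⋯+j_r=m} F_{j_1+1}⋯F_{j_r+1}`. -/
def convFib (r m : ℕ) : ℕ :=
  ∑ t ∈ Finset.Nat.antidiagonalTuple r m, ∏ i, Nat.fib (t i + 1)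

/-- The Lucas numbers: `L_0 = 2`, `L_1 = 1`, `L_{n+2} = L_{n+1} + L_n`. -/
def lucas : ℕ → ℕ
  | 0 => 2
  | 1 => 1
  | n + 2 => lucas (n + 1) + lucas n

open Finset PowerSeries Real
open scoped goldenRatio

section Bezout
variable {R : Type*} [CommRing R]

theorem one_sub_mul_sum_range_choose_succ (m : ℕ) (u : R) :
    (1 - u) * ∑ k ∈ range (m + 2), ((m + 1 + k).choose k : R) * u ^ k =
      ∑ k ∈ range (m + 1), ((m + k).choose k : R) * u ^ k
        + ((2 * m + 1).choose (m + 1) : R) * u ^ (m + 1)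
        - ((2 * m + 2).choose (m + 1) : R) * u ^ (m + 2) := by
  set T := ∑ k ∈ range (m + 2), ((m + 1 + k).choose k : R) * u ^ k
  have hpascal : T = ∑ k ∈ range (m + 1), ((m + 1 + k).choose k : R) * u ^ (k + 1)
      + ∑ k ∈ range (m + 1), ((m + 1 + k).choose (k + 1) : R) * u ^ (k + 1) + 1 := by
    simp only [T, sum_range_succ' _ (m + 1), ← sum_add_distrib, ← add_mul]
    simp [show ∀ k, m + 1 + (k + 1) = m + 1 + k + 1 from fun k => by omega, Nat.choose_succ_succ]
  have hshift : ∑ k ∈ range (m + 1), ((m + 1 + k).choose k : R) * u ^ (k + 1) =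
      u * (T - ((2 * m + 2).choose (m + 1) : R) * u ^ (m + 1)) := by
    simp only [T, sum_range_succ _ (m + 1), show m + 1 + (m + 1) = 2 * m + 2 by omega,
      add_sub_cancel_right, mul_sum, pow_succ]
    exact sum_congr rfl fun k _ => by ring
  have hlower : ∑ k ∈ range (m + 1), ((m + 1 + k).choose (k + 1) : R) * u ^ (k + 1) + 1 =
      ∑ k ∈ range (m + 1), ((m + k).choose k : R) * u ^ k
        + ((2 * m + 1).choose (m + 1) : R) * u ^ (m + 1) := by
    rw [show 2 * m + 1 = m + (m + 1) by omega,
      ← sum_range_succ (fun k => ((m + k).choose k : R) * u ^ k),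
      sum_range_succ' (fun k => ((m + k).choose k : R) * u ^ k)]
    simp [← add_assoc, add_right_comm m]
  linear_combination hpascal + hshift + hlower

theorem one_sub_pow_mul_sum_range_choose_add_pow_mul_sum_range_choose (m : ℕ) (u : R) :
    (1 - u) ^ (m + 1) * ∑ k ∈ range (m + 1), ((m + k).choose k : R) * u ^ k
      + u ^ (m + 1) * ∑ k ∈ range (m + 1), ((m + k).choose k : R) * (1 - u) ^ k = 1 := by
  induction m with
  | zero => simp
  | succ m ih =>
    have hu := one_sub_mul_sum_range_choose_succ m u
    have hv := one_sub_mul_sum_range_choose_succ m (1 - u)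
    rw [sub_sub_cancel] at hv
    have hcentral : ((2 * m + 2).choose (m + 1) : R) = 2 * ((2 * m + 1).choose (m + 1) : R) := by
      rw [Nat.choose_succ_succ, ← Nat.choose_symm_half]
      push_cast
      ring
    linear_combination (1 - u) ^ (m + 1) * hu + u ^ (m + 1) * hv + ih
      - u ^ (m + 1) * (1 - u) ^ (m + 1) * hcentral

theorem mul_pow_succ_eq_sum_of_add_eq_one {g h p q c d : R} (hg : g * p = 1) (hh : h * q = 1)
    (hcd : c * p + d * q = 1) (m : ℕ) :
    (g * h) ^ (m + 1) = ∑ k ∈ range (m + 1), ((m + k).choose k : R) *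
      (d ^ (m + 1) * c ^ k * g ^ (m + 1 - k) + c ^ (m + 1) * d ^ k * h ^ (m + 1 - k)) := by
  have hbez := one_sub_pow_mul_sum_range_choose_add_pow_mul_sum_range_choose m (c * p)
  rw [show 1 - c * p = d * q by linear_combination -hcd, mul_sum, mul_sum, ← sum_add_distrib]
    at hbez
  rw [← mul_one ((g * h) ^ (m + 1)), ← hbez, mul_sum]
  refine sum_congr rfl fun k hk => ?_
  obtain ⟨e, he⟩ : ∃ e, m + 1 = k + e := ⟨m + 1 - k, by grind⟩
  rw [he, Nat.add_sub_cancel_left]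
  calc (g * h) ^ (k + e) * ((d * q) ^ (k + e) * (((m + k).choose k : R) * (c * p) ^ k)
        + (c * p) ^ (k + e) * (((m + k).choose k : R) * (d * q) ^ k))
      = ((m + k).choose k : R) * (d ^ (k + e) * c ^ k * g ^ e * (g * p) ^ k * (h * q) ^ (k + e)
        + c ^ (k + e) * d ^ k * h ^ e * (g * p) ^ (k + e) * (h * q) ^ k) := by ring
    _ = _ := by simp only [hg, hh, one_pow, mul_one]
end Bezout

section Geometric
variable {R : Type*} [CommRing R]

theorem rescale_mk_one_mul_one_sub_C_mul_X (a : R) : rescale a (mk 1) * (1 - C a * X) = 1 := by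
  simpa [rescale_X] using congrArg (rescale a) (mk_one_mul_one_sub_eq_one R)

theorem coeff_rescale_mk_one_pow (a : R) (d n : ℕ) :
    coeff n (rescale a (mk 1) ^ (d + 1)) = ((d + n).choose n : R) * a ^ n := by
  rw [← map_pow, mk_one_pow_eq_mk_choose_add, coeff_rescale, coeff_mk, Nat.choose_symm_add,
    mul_comm]

end Geometric

section PartialFractions
variable {K : Type*} [Field K]

theorem one_sub_C_mul_X_bezout (a b : K) (hab : a ≠ b) :
    C (b / (b - a)) * (1 - C a * X) + C (a / (a - b)) * (1 - C b * X) = 1 := by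
  have hsub : b - a ≠ 0 := sub_ne_zero.mpr hab.symm
  have hsub' : a - b ≠ 0 := sub_ne_zero.mpr hab
  have hconst : b / (b - a) + a / (a - b) = 1 := by field_simp; ring
  have hlin : b / (b - a) * a + a / (a - b) * b = 0 := by field_simp; ring
  calc C (b / (b - a)) * (1 - C a * X) + C (a / (a - b)) * (1 - C b * X)
      = C (b / (b - a) + a / (a - b)) - C (b / (b - a) * a + a / (a - b) * b) * X := by
        simp only [map_add, map_mul]; ring
    _ = 1 := by rw [hconst, hlin]; simp

theorem coeff_rescale_mk_one_mul_rescale_mk_one_pow (a b : K) (hab : a ≠ b) (m j : ℕ) :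
    coeff j ((rescale a (mk 1) * rescale b (mk 1)) ^ (m + 1)) =
      ∑ k ∈ range (m + 1), ((m + k).choose k : K) * ((m - k + j).choose j : K) *
        ((a / (a - b)) ^ (m + 1) * (b / (b - a)) ^ k * a ^ j
          + (b / (b - a)) ^ (m + 1) * (a / (a - b)) ^ k * b ^ j) := by
  rw [mul_pow_succ_eq_sum_of_add_eq_one (rescale_mk_one_mul_one_sub_C_mul_X a)
    (rescale_mk_one_mul_one_sub_C_mul_X b) (one_sub_C_mul_X_bezout a b hab), map_sum]
  refine sum_congr rfl fun k hk => ?_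
  rw [show m + 1 - k = m - k + 1 by grind, ← map_natCast C]
  simp only [← map_pow C, ← map_mul C, coeff_C_mul, map_add, coeff_rescale_mk_one_pow]
  ring

end PartialFractions

def fibSeries (R : Type*) [Semiring R] : R⟦X⟧ := mk fun n => (Nat.fib (n + 1) : R)

theorem fibSeries_mul_one_sub_X_sub_X_sq (R : Type*) [CommRing R] :
    fibSeries R * (1 - X - X ^ 2) = 1 := by
  ext (_ | _ | n) <;>
    simp [fibSeries, mul_sub, coeff_one, coeff_succ_mul_X, coeff_mul_X_pow', Nat.fib_add_two]

theorem convFib_eq_coeff_fibSeries_pow (R : Type*) [CommSemiring R] (r m : ℕ) :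
    (convFib r m : R) = coeff m (fibSeries R ^ r) := by
  rw [← Fin.prod_const, coeff_prod, finsuppAntidiag, sum_map, convFib,
    ← piAntidiag_univ_fin_eq_antidiagonalTuple, ← sum_attach, Nat.cast_sum]
  refine sum_congr rfl fun f _ => ?_
  simp [fibSeries]

theorem fibSeries_eq_rescale_mul_rescale {R : Type*} [CommRing R] {a b : R} (hsum : a + b = 1)
    (hprod : a * b = -1) : fibSeries R = rescale a (mk 1) * rescale b (mk 1) := by
  have hfactor : (1 - X - X ^ 2 : R⟦X⟧) = (1 - C a * X) * (1 - C b * X) := by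
    calc (1 - X - X ^ 2 : R⟦X⟧) = 1 - C (a + b) * X + C (a * b) * X ^ 2 := by
          rw [hsum, hprod]; simp; ring
      _ = (1 - C a * X) * (1 - C b * X) := by simp only [map_add, map_mul]; ring
  refine left_inv_eq_right_inv (fibSeries_mul_one_sub_X_sub_X_sq R) ?_
  calc (1 - X - X ^ 2) * (rescale a (mk 1) * rescale b (mk 1))
      = (rescale a (mk 1) * (1 - C a * X)) * (rescale b (mk 1) * (1 - C b * X)) := by
        rw [hfactor]; ring
    _ = 1 := by rw [rescale_mk_one_mul_one_sub_C_mul_X, rescale_mk_one_mul_one_sub_C_mul_X, one_mul]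

theorem coe_lucas_eq (n : ℕ) : (lucas n : ℝ) = φ ^ n + ψ ^ n := by
  induction n using Nat.twoStepInduction with
  | zero => norm_num [lucas]
  | one => simp [lucas, goldenRatio_add_goldenConj]
  | more n ih1 ih2 =>
    rw [lucas, Nat.cast_add, ih1, ih2]
    linear_combination -(φ ^ n * goldenRatio_sq + ψ ^ n * goldenConj_sq)

theorem golden_weights_eq {r k : ℕ} (hk : k ≤ r) (j : ℕ) :
    (φ / (φ - ψ)) ^ r * (ψ / (ψ - φ)) ^ k * φ ^ j + (ψ / (ψ - φ)) ^ r * (φ / (φ - ψ)) ^ k * ψ ^ j =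
      (φ ^ (r - k + j) + (-1) ^ (r - k) * ψ ^ (r - k + j)) / √5 ^ (r + k) := by
  obtain ⟨e, rfl⟩ := Nat.exists_eq_add_of_le hk
  rw [Nat.add_sub_cancel_left, show ψ - φ = -√5 by rw [← goldenRatio_sub_goldenConj]; ring,
    goldenRatio_sub_goldenConj]
  have hprod := goldenRatio_mul_goldenConj
  -- otherwise `ring` unfolds `φ` and `ψ` into expressions in `√5`
  generalize φ = x, ψ = y, √5 = s at hprod ⊢
  calc (x / s) ^ (k + e) * (y / -s) ^ k * x ^ j + (y / -s) ^ (k + e) * (x / s) ^ k * y ^ j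
      = (-(x * y)) ^ k * ((x ^ (e + j) + (-1) ^ e * y ^ (e + j)) / s ^ (k + e + k)) := by ring
    _ = _ := by rw [hprod, neg_neg, one_pow, one_mul]

theorem sqrt_five_pow_two_mul (t : ℕ) : √5 ^ (2 * t) = 5 ^ t := by
  rw [pow_mul, sq_sqrt (by norm_num)]

theorem golden_weights_eq_lucas_div {r k t : ℕ} (hk : k ≤ r) (ht : r + k = 2 * t) (j : ℕ) :
    (φ / (φ - ψ)) ^ r * (ψ / (ψ - φ)) ^ k * φ ^ j + (ψ / (ψ - φ)) ^ r * (φ / (φ - ψ)) ^ k * ψ ^ j =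
      lucas (r - k + j) / 5 ^ t := by
  rw [golden_weights_eq hk, ht, Even.neg_one_pow ⟨t - k, by omega⟩, one_mul, coe_lucas_eq,
    sqrt_five_pow_two_mul]

theorem golden_weights_eq_fib_div {r k t : ℕ} (hk : k ≤ r) (ht : r + k = 2 * t + 1) (j : ℕ) :
    (φ / (φ - ψ)) ^ r * (ψ / (ψ - φ)) ^ k * φ ^ j + (ψ / (ψ - φ)) ^ r * (φ / (φ - ψ)) ^ k * ψ ^ j =
      Nat.fib (r - k + j) / 5 ^ t := by
  rw [golden_weights_eq hk, ht, Odd.neg_one_pow ⟨t - k, by omega⟩, coe_fib_eq, pow_succ,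
    sqrt_five_pow_two_mul, div_div]
  ring

/-- Theorem 4 of the paper: for `j ≥ 0` and `r ≥ 1`, as an identity in `ℚ`,
`F_{j+1}^{(r)} = ∑_{k=0, r+k ≡ 0 (2)}^{r-1} C(r+k-1,k) C(r-k+j-1,j) L_{r-k+j} / 5^{(k+r)/2}
  + ∑_{k=0, r+k ≡ 1 (2)}^{r-1} C(r+k-1,k) C(r-k+j-1,j) F_{r-k+j} / 5^{(k+r-1)/2}`. -/
theorem convFib_eq_fib_lucas_sum (j r : ℕ) (hr : 1 ≤ r) :
    (convFib r j : ℚ) =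
      (∑ k ∈ Finset.range r, if (r + k) % 2 = 0 then
          (Nat.choose (r + k - 1) k : ℚ) * (Nat.choose (r - k + j - 1) j : ℚ) *
            (lucas (r - k + j) : ℚ) / 5 ^ ((k + r) / 2) else 0) +
      (∑ k ∈ Finset.range r, if (r + k) % 2 = 1 then
          (Nat.choose (r + k - 1) k : ℚ) * (Nat.choose (r - k + j - 1) j : ℚ) *
            (Nat.fib (r - k + j) : ℚ) / 5 ^ ((k + r - 1) / 2) else 0) := by
  obtain ⟨m, rfl⟩ : ∃ m, r = m + 1 := ⟨r - 1, by omega⟩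
  apply Rat.cast_injective (α := ℝ)
  push_cast [apply_ite (Rat.cast (K := ℝ))]
  rw [convFib_eq_coeff_fibSeries_pow,
    fibSeries_eq_rescale_mul_rescale goldenRatio_add_goldenConj goldenRatio_mul_goldenConj,
    coeff_rescale_mk_one_mul_rescale_mk_one_pow _ _ (goldenConj_neg.trans goldenRatio_pos).ne',
    ← sum_add_distrib]
  refine sum_congr rfl fun k hkr => ?_
  have hk : k ≤ m := Nat.lt_succ_iff.mp (mem_range.mp hkr)
  rw [show m + 1 + k - 1 = m + k by omega, show m + 1 - k + j - 1 = m - k + j by omega]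
  rcases Nat.even_or_odd' (m + 1 + k) with ⟨t, ht | ht⟩
  · rw [golden_weights_eq_lucas_div (by omega) ht, if_pos (by omega), if_neg (by omega),
      show (k + (m + 1)) / 2 = t by omega]
    ring
  · rw [golden_weights_eq_fib_div (by omega) ht, if_neg (by omega), if_pos (by omega),
      show (k + (m + 1) - 1) / 2 = t by omega]
    ring
end

section
/- For every integer j ≥ 0, one has 5·F_{j+1}^{(2)} = (j+1)·L_{j+2} + 2·F_{j+1}, where F_n are the Fibonacci numbers and L_n the Lucas numbers. -/
/-!
Writing `S n = ∑_{a+b=n} F_{a+1} F_{b+1}` and splitting `F_{b+3} = F_{b+2} + F_{b+1}` in the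
second factor gives `S (n+2) = S (n+1) + S n + F_{n+3}`. The right-hand side satisfies the same
recurrence because `L_{n+2} + L_n = 5 F_{n+1}`, so the identity follows by two-step induction.
-/

open Finset Nat

lemma lucas_add_two_add_lucas : ∀ n, lucas (n + 2) + lucas n = 5 * fib (n + 1)
  | 0 => rfl
  | 1 => rfl
  | n + 2 => by
    have h₀ := lucas_add_two_add_lucas n
    have h₁ := lucas_add_two_add_lucas (n + 1)
    simp only [lucas, fib_add_two] at h₀ h₁ ⊢
    omega

lemma convFib_two_eq_sum_antidiagonal (n : ℕ) :
    convFib 2 n = ∑ p ∈ antidiagonal n, fib (p.1 + 1) * fib (p.2 + 1) := by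
  simp [convFib, Finset.Nat.antidiagonalTuple_two, Fin.prod_univ_two]

lemma convFib_two_add_two (n : ℕ) :
    convFib 2 (n + 2) = convFib 2 (n + 1) + convFib 2 n + fib (n + 3) := by
  have shift : ∑ p ∈ antidiagonal (n + 1), fib (p.1 + 1) * fib p.2 = convFib 2 n := by
    rw [Nat.sum_antidiagonal_succ', convFib_two_eq_sum_antidiagonal]
    simp
  have split : ∑ p ∈ antidiagonal (n + 1), fib (p.1 + 1) * fib (p.2 + 2) =
      ∑ p ∈ antidiagonal (n + 1), fib (p.1 + 1) * fib p.2 +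
        ∑ p ∈ antidiagonal (n + 1), fib (p.1 + 1) * fib (p.2 + 1) := by
    simp only [fib_add_two, mul_add, sum_add_distrib]
  rw [convFib_two_eq_sum_antidiagonal, Nat.sum_antidiagonal_succ', split, shift,
    convFib_two_eq_sum_antidiagonal (n + 1)]
  simp only [zero_add, fib_one, mul_one]
  ring

/-- For every integer `j ≥ 0`, `5 F_{j+1}^{(2)} = (j+1) L_{j+2} + 2 F_{j+1}`. -/
theorem five_mul_convFib_two (j : ℕ) :
    5 * convFib 2 j = (j + 1) * lucas (j + 2) + 2 * Nat.fib (j + 1) := by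
  induction j using Nat.twoStepInduction with
  | zero => rfl
  | one => rfl
  | more n ih₀ ih₁ =>
    rw [convFib_two_add_two, mul_add, mul_add, ih₀, ih₁, ← lucas_add_two_add_lucas (n + 2),
      fib_add_two (n := n + 1)]
    simp only [lucas]
    ring
end

section
/- Let f be a formal power series with integer coefficients and r ≥ 1 an integer. Then the Witt transform W_f^{(r)}(z) = (1/r) Σ_{d | r} μ(d) f(z^d)^{r/d} also has integer coefficients; that is, for every j ≥ 0, the rational number m_f(j, r) is an integer (equivalently, r divides the j-th coefficient of Σ_{d | r} μ(d) f(z^d)^{r/d}). -/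
/-!
Write `S_r(g) = ∑_{d ∣ r} μ(d) g(z^d)^{r/d}`. Truncating `f` above degree `j` reduces the claim to
an integer polynomial `g`, and it suffices to show `p^k ∣ S_r(g)` for every prime power `p^k ∥ r`.
Write `r = p^k n` with `p ∤ n`. Only squarefree divisors contribute, and they pair up as `e, pe`
with `e ∣ n`, so `S_r(g) = ∑_{e ∣ n} μ(e) (h^{p^k t} - h(z^p)^{p^{k-1} t})` where `h = g(z^e)` and
`n = e t`. Since `h^p ≡ h(z^p) mod p`, raising to the power `p^{k-1}` gives
`h^{p^k} ≡ h(z^p)^{p^{k-1}} mod p^k`, so every term is divisible by `p^k`.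
-/

/-- Substitution of `z^d` into a formal power series: `expandPS d f = f(z^d)`. -/
noncomputable def expandPS (d : ℕ) (f : PowerSeries ℚ) : PowerSeries ℚ :=
  PowerSeries.mk fun j => if d ∣ j then PowerSeries.coeff (R := ℚ) (j / d) f else 0

/-- The Witt transform `W_f^{(r)}(z) = (1/r) ∑_{d ∣ r} μ(d) f(z^d)^{r/d}`;
its `j`-th coefficient is `m_f(j, r)`. -/
noncomputable def witt (f : PowerSeries ℚ) (r : ℕ) : PowerSeries ℚ :=
  (1 / (r : ℚ)) • ∑ d ∈ r.divisors,
    ((ArithmeticFunction.moebius d : ℤ) : ℚ) • (expandPS d f) ^ (r / d)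

open Polynomial ArithmeticFunction ArithmeticFunction.Moebius

theorem Nat.sum_divisors_prime_pow_mul_moebius_smul {M : Type*} [AddCommGroup M] {p n : ℕ}
    (hp : p.Prime) (hn : ¬ p ∣ n) (k : ℕ) (F : ℕ → M) :
    ∑ d ∈ (p ^ (k + 1) * n).divisors, μ d • F d =
      ∑ e ∈ n.divisors, μ e • (F e - F (p * e)) := by
  have hcop : ∀ i, ∀ e ∈ n.divisors, (p ^ i).Coprime e := fun i e he =>
    (hp.coprime_iff_not_dvd.2 fun hpe => hn (hpe.trans (Nat.dvd_of_mem_divisors he))).pow_left i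
  have hμ : ∀ i, ∀ e ∈ n.divisors, μ (p ^ i * e) = μ (p ^ i) * μ e := fun i e he =>
    isMultiplicative_moebius.map_mul_of_coprime (hcop i e he)
  have hn0 : n ≠ 0 := by rintro rfl; exact hn (dvd_zero p)
  rw [Nat.divisors_mul, Finset.mul_def, Finset.sum_image
    ((hcop (k + 1) n (Nat.mem_divisors_self n hn0)).mul_injOn_divisors), Finset.sum_product,
    Nat.sum_divisors_prime_pow hp, Finset.sum_range_succ', Finset.sum_range_succ',
    Finset.sum_eq_zero, zero_add, ← Finset.sum_add_distrib]
  · refine Finset.sum_congr rfl fun e he => ?_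
    have hμp : μ (p * e) = -μ e := by
      rw [← pow_one p, hμ 1 e he, pow_one, moebius_apply_prime hp, neg_one_mul]
    simp only [zero_add, pow_zero, pow_one, one_mul, hμp, neg_smul, smul_sub]
    abel
  · intro i _
    refine Finset.sum_eq_zero fun e he => ?_
    rw [hμ _ e he, moebius_apply_prime_pow hp (by omega)]
    simp

theorem Int.natCast_dvd_of_forall_ordProj_dvd {r : ℕ} (hr : r ≠ 0) {m : ℤ}
    (h : ∀ p : ℕ, p.Prime → (ordProj[p] r : ℤ) ∣ m) : (r : ℤ) ∣ m := by
  simp only [← Nat.cast_pow, Int.natCast_dvd] at h ⊢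
  exact (Nat.dvd_iff_prime_pow_dvd_dvd _ r).2 fun p k hp hpk =>
    (pow_dvd_pow p ((hp.pow_dvd_iff_le_factorization hr).1 hpk)).trans (h p hp)

namespace Polynomial

/-- Over `𝔽_p`, `expand p` is the Frobenius. -/
theorem natCast_dvd_pow_sub_expand {p : ℕ} (hp : p.Prime) (h : ℤ[X]) :
    (p : ℤ[X]) ∣ h ^ p - expand ℤ p h := by
  have := Fact.mk hp
  rw [← map_natCast C, C_dvd_iff_dvd_coeff]
  intro i
  rw [← ZMod.intCast_zmod_eq_zero_iff_dvd, ← eq_intCast (Int.castRingHom (ZMod p)), ← coeff_map]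
  simp [Polynomial.map_sub, Polynomial.map_pow, map_expand, ZMod.expand_card]

theorem natCast_pow_dvd_pow_sub_expand_pow {p : ℕ} (hp : p.Prime) (h : ℤ[X])
    (k t : ℕ) : (p : ℤ[X]) ^ (k + 1) ∣ h ^ (p ^ (k + 1) * t) - expand ℤ p h ^ (p ^ k * t) := by
  rw [pow_succ' p, mul_assoc, pow_mul, pow_mul, pow_mul]
  exact (dvd_sub_pow_of_dvd_sub (natCast_dvd_pow_sub_expand hp h) k).trans
    (sub_dvd_pow_sub_pow _ _ t)

/-- `r • W_g^{(r)}` for an integer polynomial `g`. -/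
noncomputable def wittNumerator (g : ℤ[X]) (r : ℕ) : ℤ[X] :=
  ∑ d ∈ r.divisors, μ d • expand ℤ d g ^ (r / d)

theorem pow_dvd_wittNumerator (g : ℤ[X]) {p n : ℕ} (hp : p.Prime) (hn : ¬ p ∣ n) (k : ℕ) :
    (p : ℤ[X]) ^ (k + 1) ∣ wittNumerator g (p ^ (k + 1) * n) := by
  rw [wittNumerator, Nat.sum_divisors_prime_pow_mul_moebius_smul hp hn k]
  refine Finset.dvd_sum fun e he => ?_
  obtain ⟨t, rfl⟩ := Nat.dvd_of_mem_divisors he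
  have he0 : 0 < e := Nat.pos_of_mem_divisors he
  have hquot_e : p ^ (k + 1) * (e * t) / e = p ^ (k + 1) * t := by
    rw [mul_left_comm, Nat.mul_div_cancel_left _ he0]
  have hquot_pe : p ^ (k + 1) * (e * t) / (p * e) = p ^ k * t := by
    rw [pow_succ', show p * p ^ k * (e * t) = p * e * (p ^ k * t) by ring,
      Nat.mul_div_cancel_left _ (Nat.mul_pos hp.pos he0)]
  rw [hquot_e, hquot_pe, ← expand_expand, zsmul_eq_mul]
  exact (natCast_pow_dvd_pow_sub_expand_pow hp _ k t).mul_left _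

theorem ordProj_dvd_wittNumerator (g : ℤ[X]) {r : ℕ} (hr : r ≠ 0) {p : ℕ} (hp : p.Prime) :
    (ordProj[p] r : ℤ[X]) ∣ wittNumerator g r := by
  obtain h0 | ⟨k, hk⟩ : r.factorization p = 0 ∨ ∃ k, r.factorization p = k + 1 := by
    cases r.factorization p <;> simp
  · simp [h0]
  · have := pow_dvd_wittNumerator g hp (Nat.not_dvd_ordCompl hp hr) k
    rwa [← hk, Nat.ordProj_mul_ordCompl_eq_self] at this

theorem natCast_dvd_coeff_wittNumerator (g : ℤ[X]) {r : ℕ} (hr : r ≠ 0) (j : ℕ) :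
    (r : ℤ) ∣ (wittNumerator g r).coeff j :=
  Int.natCast_dvd_of_forall_ordProj_dvd hr fun p hp =>
    (C_dvd_iff_dvd_coeff _ _).1 (by simpa using ordProj_dvd_wittNumerator g hr hp) j

end Polynomial

theorem PowerSeries.coeff_pow_eq_of_trunc_eq {R : Type*} [CommSemiring R] {a b : PowerSeries R}
    {n : ℕ} (h : trunc (n + 1) a = trunc (n + 1) b) (m : ℕ) :
    coeff n (a ^ m) = coeff n (b ^ m) := by
  have := congrArg (fun q : R[X] => (trunc (n + 1) ((q : PowerSeries R) ^ m)).coeff n) h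
  simpa [coeff_trunc] using this

theorem coeff_expandPS_pow {f : PowerSeries ℚ} {g : ℤ[X]} {j : ℕ}
    (hfg : ∀ i ≤ j, PowerSeries.coeff i f = g.coeff i) {d : ℕ} (hd : d ≠ 0) (m : ℕ) :
    PowerSeries.coeff j (expandPS d f ^ m) = ((expand ℤ d g ^ m).coeff j : ℚ) := by
  have htrunc : PowerSeries.trunc (j + 1) (expandPS d f) =
      PowerSeries.trunc (j + 1) ((expand ℤ d g).map (Int.castRingHom ℚ) : PowerSeries ℚ) := by
    ext i
    simp only [PowerSeries.coeff_trunc, expandPS, PowerSeries.coeff_mk, coeff_coe, coeff_map,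
      coeff_expand (Nat.pos_of_ne_zero hd)]
    split_ifs with hi
    · simp [hfg _ ((Nat.div_le_self i d).trans (Nat.le_of_lt_succ hi))]
    · simp
    · rfl
  rw [PowerSeries.coeff_pow_eq_of_trunc_eq htrunc, ← coe_pow, coeff_coe, ← Polynomial.map_pow,
    coeff_map, eq_intCast]

theorem coeff_witt {f : PowerSeries ℚ} {g : ℤ[X]} {j : ℕ}
    (hfg : ∀ i ≤ j, PowerSeries.coeff i f = g.coeff i) (r : ℕ) :
    PowerSeries.coeff j (witt f r) = ((wittNumerator g r).coeff j : ℚ) / r := by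
  rw [witt, wittNumerator, map_smul, map_sum, finsetSum_coeff, smul_eq_mul, one_div_mul_eq_div,
    Int.cast_sum]
  congr 1
  refine Finset.sum_congr rfl fun d hd => ?_
  rw [map_smul, coeff_expandPS_pow hfg (Nat.pos_of_mem_divisors hd).ne', coeff_smul]
  simp

/-- If `f ∈ ℤ[[z]]` and `r ≥ 1`, then every coefficient `m_f(j, r)` of the Witt
transform `W_f^{(r)}` is an integer. -/
theorem witt_coeff_isInt (f : PowerSeries ℚ)
    (hf : ∀ j, ∃ n : ℤ, PowerSeries.coeff (R := ℚ) j f = n) (r : ℕ) (hr : 1 ≤ r) :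
    ∀ j, ∃ n : ℤ, PowerSeries.coeff (R := ℚ) j (witt f r) = n := by
  intro j
  choose a ha using hf
  set g : ℤ[X] := PowerSeries.trunc (j + 1) (PowerSeries.mk a)
  have hfg : ∀ i ≤ j, PowerSeries.coeff i f = g.coeff i := fun i hi => by
    simp [g, PowerSeries.coeff_trunc, ha, Nat.lt_succ_of_le hi]
  obtain ⟨q, hq⟩ := g.natCast_dvd_coeff_wittNumerator (by omega : r ≠ 0) j
  refine ⟨q, ?_⟩
  rw [coeff_witt hfg, hq]
  push_cast
  field_simp
end

section
/- Let j ≥ 1 and r ≥ 1 be integers. If r ≡ 2 (mod 4) and j is odd, then H_j^{(r)} = G_j^{(r)} + G_{(j+1)/2}^{(r/2)}; otherwise H_j^{(r)} = G_j^{(r)}. -/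
/-- The convoluted convolved Fibonacci numbers:
`Gfib r m = G_{m+1}^{(r)} = (1/r) ∑_{d ∣ gcd(r,m)} μ(d) F_{m/d+1}^{(r/d)}`. -/
noncomputable def Gfib (r m : ℕ) : ℚ :=
  (1 / (r : ℚ)) * ∑ d ∈ (Nat.gcd r m).divisors,
    ((ArithmeticFunction.moebius d : ℤ) : ℚ) * convFib (r / d) (m / d)

/-- The sign twisted convoluted convolved Fibonacci numbers:
`Hfib r m = H_{m+1}^{(r)} = ((-1)^r/r) ∑_{d ∣ gcd(r,m)} μ(d) (-1)^{r/d} F_{m/d+1}^{(r/d)}`. -/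
noncomputable def Hfib (r m : ℕ) : ℚ :=
  ((-1 : ℚ) ^ r / (r : ℚ)) * ∑ d ∈ (Nat.gcd r m).divisors,
    ((ArithmeticFunction.moebius d : ℤ) : ℚ) * (-1 : ℚ) ^ (r / d) * convFib (r / d) (m / d)

/-! For squarefree `d ∣ r`, `r / d` has the parity of `r` unless `d` is even and `r ≡ 2 (mod 4)`,
so every sign `(-1)^r (-1)^{r/d}` in `H` is `1` outside that case. In that case `r = 2r'` with
`r'` odd, and `j - 1 = 2m'` must be even for an even `d` to divide it. The divisors of
`gcd(r, j - 1) = 2 gcd(r', m')` are then `e` and `2e` with `e` odd, and at `2e` both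
`μ(2e) = -μ(e)` and `(-1)^{r'/e} = -1` change sign: these terms contribute `-r' G^{(r')}_{m'+1}`
to `r G` and `+r' G^{(r')}_{m'+1}` to `r H`. -/

open Finset ArithmeticFunction
open scoped ArithmeticFunction.Moebius

theorem Nat.sum_divisors_two_mul_of_odd {M : Type*} [AddCommMonoid M] {g : ℕ} (hg : Odd g)
    (f : ℕ → M) : ∑ d ∈ (2 * g).divisors, f d = ∑ e ∈ g.divisors, (f e + f (2 * e)) := by
  rw [Nat.divisors_mul, Finset.mul_def,
    sum_image (Nat.coprime_two_left.mpr hg).mul_injOn_divisors, sum_product, Nat.prime_two.divisors,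
    sum_pair (by norm_num), ← sum_add_distrib]
  simp only [one_mul]

theorem ArithmeticFunction.moebius_two_mul_of_odd {e : ℕ} (he : Odd e) : μ (2 * e) = -μ e := by
  rw [isMultiplicative_moebius.map_mul_of_coprime (Nat.coprime_two_left.mpr he),
    moebius_apply_prime Nat.prime_two, neg_one_mul]

theorem Nat.even_div_iff_of_squarefree {d r : ℕ} (hdr : d ∣ r) (hd : Squarefree d)
    (h : ¬(r % 4 = 2 ∧ Even d)) : Even (r / d) ↔ Even r := by
  obtain ⟨q, rfl⟩ := hdr
  rw [Nat.mul_div_cancel_left _ (Nat.pos_of_ne_zero hd.ne_zero)]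
  rcases Nat.even_or_odd d with ⟨d', rfl⟩ | hd_odd
  · have hd' : Odd d' := by
      rw [← Nat.not_even_iff_odd]
      rintro ⟨c, rfl⟩
      have h2 := hd 2 ⟨c, by ring⟩
      simp at h2
    refine ⟨fun hq => hq.mul_left _, fun _ => ?_⟩
    by_contra hq
    obtain ⟨k, hk⟩ := hd'.mul (Nat.not_even_iff_odd.mp hq)
    have hr : (d' + d') * q = 4 * k + 2 := by rw [← two_mul, mul_assoc, hk]; ring
    exact h ⟨by omega, ⟨d', rfl⟩⟩
  · simp [Nat.even_mul, Nat.not_even_iff_odd.mpr hd_odd]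

theorem Hfib_eq_Gfib_of_not_mod_four_eq_two_and_even (r m : ℕ) (h : ¬(r % 4 = 2 ∧ Even m)) :
    Hfib r m = Gfib r m := by
  rw [Hfib, Gfib, div_eq_mul_one_div, mul_comm _ (1 / _), mul_assoc, mul_sum]
  congr 1
  refine sum_congr rfl fun d hd => ?_
  obtain ⟨hdr, hdm⟩ := Nat.dvd_gcd_iff.mp (Nat.dvd_of_mem_divisors hd)
  by_cases hμ : μ d = 0
  · simp [hμ]
  have hsign : (-1 : ℚ) ^ (r / d) = (-1) ^ r := by
    refine neg_one_pow_congr (Nat.even_div_iff_of_squarefree hdr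
      (moebius_ne_zero_iff_squarefree.mp hμ) fun ⟨hr, hd⟩ => h ⟨hr, ?_⟩)
    exact even_iff_two_dvd.mpr (hd.two_dvd.trans hdm)
  have hsq : (-1 : ℚ) ^ r * (-1) ^ r = 1 := by rw [← pow_add, Even.neg_one_pow ⟨r, rfl⟩]
  rw [hsign]
  linear_combination (μ d * convFib (r / d) (m / d) : ℚ) * hsq

theorem Hfib_two_mul_eq_Gfib_add_Gfib (r m : ℕ) (hr : Odd r) :
    Hfib (2 * r) (2 * m) = Gfib (2 * r) (2 * m) + Gfib r m := by
  have hg : Odd (r.gcd m) := hr.of_dvd_nat (Nat.gcd_dvd_left r m)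
  have hdvd : ∀ e ∈ (r.gcd m).divisors, e ∣ r := fun e he =>
    (Nat.dvd_of_mem_divisors he).trans (Nat.gcd_dvd_left r m)
  have halve : ∀ e, 2 * r / (2 * e) = r / e ∧ 2 * m / (2 * e) = m / e := fun e =>
    ⟨Nat.mul_div_mul_left _ _ two_pos, Nat.mul_div_mul_left _ _ two_pos⟩
  set A := ∑ e ∈ (r.gcd m).divisors, ((μ e : ℤ) : ℚ) * convFib (2 * r / e) (2 * m / e)
  set B := ∑ e ∈ (r.gcd m).divisors, ((μ e : ℤ) : ℚ) * convFib (r / e) (m / e)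
  have hG : ∑ d ∈ ((2 * r).gcd (2 * m)).divisors,
      ((μ d : ℤ) : ℚ) * convFib (2 * r / d) (2 * m / d) = A - B := by
    rw [Nat.gcd_mul_left, Nat.sum_divisors_two_mul_of_odd hg, sum_add_distrib, sub_eq_add_neg,
      ← sum_neg_distrib]
    congr 1
    refine sum_congr rfl fun e he => ?_
    rw [moebius_two_mul_of_odd (hr.of_dvd_nat (hdvd e he)), (halve e).1, (halve e).2]
    push_cast
    ring
  have hH : ∑ d ∈ ((2 * r).gcd (2 * m)).divisors,
      ((μ d : ℤ) : ℚ) * (-1) ^ (2 * r / d) * convFib (2 * r / d) (2 * m / d) = A + B := by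
    rw [Nat.gcd_mul_left, Nat.sum_divisors_two_mul_of_odd hg, sum_add_distrib]
    congr 1 <;> refine sum_congr rfl fun e he => ?_
    · rw [Nat.mul_div_assoc 2 (hdvd e he), pow_mul, neg_one_sq, one_pow, mul_one]
    · rw [moebius_two_mul_of_odd (hr.of_dvd_nat (hdvd e he)), (halve e).1, (halve e).2,
        (hr.of_dvd_nat (Nat.div_dvd_of_dvd (hdvd e he))).neg_one_pow]
      push_cast
      ring
  have hr0 : (r : ℚ) ≠ 0 := by exact_mod_cast hr.pos.ne'
  simp only [Hfib, Gfib]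
  rw [hH, hG, Even.neg_one_pow ⟨r, two_mul r⟩]
  push_cast
  field_simp
  ring

theorem Hfib_eq_Gfib_general (j r : ℕ) (hj : 1 ≤ j) :
    Hfib r (j - 1) =
      if r % 4 = 2 ∧ j % 2 = 1 then
        Gfib r (j - 1) + Gfib (r / 2) ((j + 1) / 2 - 1)
      else Gfib r (j - 1) := by
  split_ifs with h
  · obtain ⟨hr, hj_odd⟩ := h
    obtain ⟨r', rfl⟩ : ∃ r', r = 2 * r' := ⟨r / 2, by omega⟩
    obtain ⟨m', hm⟩ : ∃ m', j - 1 = 2 * m' := ⟨(j - 1) / 2, by omega⟩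
    have hm' : (j + 1) / 2 - 1 = m' := by omega
    rw [hm, hm', Nat.mul_div_cancel_left r' two_pos]
    exact Hfib_two_mul_eq_Gfib_add_Gfib r' m' (Nat.odd_iff.mpr (by omega))
  · refine Hfib_eq_Gfib_of_not_mod_four_eq_two_and_even r (j - 1) fun ⟨hr, k, hk⟩ => h ⟨hr, ?_⟩
    omega

/-- Proposition 1, part 3): for `j, r ≥ 1`,
`H_j^{(r)} = G_j^{(r)} + G_{(j+1)/2}^{(r/2)}` if `r ≡ 2 (mod 4)` and `j` is odd,
and `H_j^{(r)} = G_j^{(r)}` otherwise.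
(Here `G_j^{(r)} = Gfib r (j-1)` and `H_j^{(r)} = Hfib r (j-1)`.) -/
theorem Hfib_eq_Gfib (j r : ℕ) (hj : 1 ≤ j) (hr : 1 ≤ r) :
    Hfib r (j - 1) =
      if r % 4 = 2 ∧ j % 2 = 1 then
        Gfib r (j - 1) + Gfib (r / 2) ((j + 1) / 2 - 1)
      else Gfib r (j - 1) :=
  Hfib_eq_Gfib_general j r hj
end

section
/- For every integer j ≥ 2 there exists a polynomial A ∈ ℤ[X] which is monic of degree j, satisfies A(0) = 0, and whose coefficient of X^{j−1} equals 3j(j−1)/2, such that for every integer r ≥ 1 one has j! · F_{j+1}^{(r)} = A(r). -/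
open Finset Finset.Nat Polynomial

theorem Finset.Nat.sum_antidiagonalTuple_succ {M : Type*} [AddCommMonoid M] (k n : ℕ)
    (f : (Fin (k + 1) → ℕ) → M) :
    ∑ t ∈ antidiagonalTuple (k + 1) n, f t =
      ∑ p ∈ antidiagonal n, ∑ t ∈ antidiagonalTuple k p.2, f (Fin.cons p.1 t) := by
  simp only [Finset.sum, antidiagonalTuple, Multiset.Nat.antidiagonalTuple,
    List.Nat.antidiagonalTuple]
  simp [List.flatMap, List.sum_flatten, List.map_flatten, Function.comp_def]
  rfl

theorem Nat.factorial_mul_multichoose (n k : ℕ) :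
    k.factorial * n.multichoose k = n.ascFactorial k := by
  rw [Nat.multichoose_eq, Nat.ascFactorial_eq_factorial_mul_choose']

section ascPochhammer

variable {S : Type*} [Semiring S] [Nontrivial S] [NoZeroDivisors S]

lemma coeff_ascPochhammer_self (n : ℕ) : (ascPochhammer S n).coeff n = 1 := by
  simpa using (monic_ascPochhammer S n).coeff_natDegree

lemma coeff_ascPochhammer_of_lt {k n : ℕ} (h : k < n) : (ascPochhammer S k).coeff n = 0 :=
  coeff_eq_zero_of_natDegree_lt (by rwa [ascPochhammer_natDegree])

lemma two_mul_coeff_ascPochhammer (n : ℕ) :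
    2 * (ascPochhammer S (n + 1)).coeff n = (n + 1) * n := by
  induction n with
  | zero => simp
  | succ n ih =>
    rw [ascPochhammer_succ_right, mul_add, coeff_add, coeff_mul_X, coeff_mul_natCast,
      coeff_ascPochhammer_self, mul_add, ← mul_assoc, ih]
    -- `Nat.cast` need not be injective on `S`, so the identity is proved in `ℕ` and pushed forward
    exact_mod_cast congrArg (Nat.cast (R := S))
      (by ring : (n + 1) * n + 2 * 1 * (n + 1) = (n + 1 + 1) * (n + 1))

end ascPochhammer

lemma convFib_zero_left (m : ℕ) : convFib 0 m = if m = 0 then 1 else 0 := by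
  cases m <;> simp [convFib]

lemma convFib_succ_left (r m : ℕ) :
    convFib (r + 1) m = ∑ p ∈ antidiagonal m, Nat.fib (p.1 + 1) * convFib r p.2 := by
  simp [convFib, sum_antidiagonalTuple_succ, Fin.prod_univ_succ, mul_sum]

@[simp] lemma convFib_zero_right (r : ℕ) : convFib r 0 = 1 := by
  simp [convFib, antidiagonalTuple_zero_right]

@[simp] lemma convFib_one_right (r : ℕ) : convFib r 1 = r := by
  induction r with
  | zero => simp [convFib_zero_left]
  | succ r ih => simp [convFib_succ_left, sum_antidiagonal_succ, ih]

lemma convFib_succ_succ (r m : ℕ) :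
    convFib (r + 1) (m + 2) = convFib r (m + 2) + convFib (r + 1) (m + 1) + convFib (r + 1) m := by
  have tail : ∑ p ∈ antidiagonal (m + 1), Nat.fib p.1 * convFib r p.2 = convFib (r + 1) m := by
    simp [sum_antidiagonal_succ, convFib_succ_left r m]
  rw [convFib_succ_left r (m + 2), sum_antidiagonal_succ, convFib_succ_left r (m + 1), ← tail,
    add_assoc (convFib r _), ← sum_add_distrib]
  congr 1
  · simp
  · exact sum_congr rfl fun p _ => by rw [Nat.fib_add_two]; ring

def convFibBinomial (r m : ℕ) : ℕ :=
  ∑ p ∈ antidiagonal m, p.1.choose p.2 * r.multichoose p.1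

lemma convFibBinomial_zero_left (m : ℕ) :
    convFibBinomial 0 m = if m = 0 then 1 else 0 := by
  cases m <;> simp [convFibBinomial, sum_antidiagonal_succ]

@[simp] lemma convFibBinomial_zero_right (r : ℕ) : convFibBinomial r 0 = 1 := by
  simp [convFibBinomial]

@[simp] lemma convFibBinomial_one_right (r : ℕ) : convFibBinomial r 1 = r := by
  simp [convFibBinomial, sum_antidiagonal_succ]

lemma convFibBinomial_succ_right (r m : ℕ) :
    convFibBinomial r (m + 1) =
      ∑ p ∈ antidiagonal m, (p.1 + 1).choose p.2 * r.multichoose (p.1 + 1) := by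
  simp [convFibBinomial, sum_antidiagonal_succ]

lemma convFibBinomial_succ_succ (r m : ℕ) :
    convFibBinomial (r + 1) (m + 2) =
      convFibBinomial r (m + 2) + convFibBinomial (r + 1) (m + 1) + convFibBinomial (r + 1) m := by
  have shift : ∑ p ∈ antidiagonal (m + 1), (p.1 + 1).choose p.2 * (r + 1).multichoose p.1 =
      convFibBinomial (r + 1) (m + 1) + convFibBinomial (r + 1) m := by
    rw [sum_antidiagonal_succ', convFibBinomial, convFibBinomial, sum_antidiagonal_succ']
    simp only [Nat.choose_succ_succ, add_mul, sum_add_distrib, Nat.choose_zero_right]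
    ring
  rw [convFibBinomial_succ_right, convFibBinomial_succ_right r, add_assoc, ← shift,
    ← sum_add_distrib]
  simp only [Nat.multichoose_succ_succ, mul_add]

theorem convFib_eq_convFibBinomial (r m : ℕ) : convFib r m = convFibBinomial r m := by
  induction r generalizing m with
  | zero => rw [convFib_zero_left, convFibBinomial_zero_left]
  | succ r ih =>
    induction m using Nat.twoStepInduction with
    | zero => simp
    | one => simp
    | more m h₀ h₁ => rw [convFib_succ_succ, convFibBinomial_succ_succ, ih, h₀, h₁]

/-- Since `j.descFactorial b = j! / a!` for `a + b = j`, this is `j! · convFibBinomial r j`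
written in the basis of rising factorials `r(r+1)⋯(r+a-1)`. -/
noncomputable def convFibPoly (j : ℕ) : ℤ[X] :=
  ∑ p ∈ antidiagonal j, (p.1.choose p.2 * j.descFactorial p.2) • ascPochhammer ℤ p.1

lemma eval_convFibPoly (j r : ℕ) :
    (convFibPoly j).eval (r : ℤ) = j.factorial * convFib r j := by
  rw [convFib_eq_convFibBinomial, convFibPoly, convFibBinomial, eval_finsetSum, Nat.cast_sum,
    mul_sum]
  refine sum_congr rfl fun p hp => ?_
  have hfac : j.factorial = p.1.factorial * j.descFactorial p.2 := by
    rw [← mem_antidiagonal.mp hp, ← Nat.factorial_mul_descFactorial (Nat.le_add_left _ _),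
      Nat.add_sub_cancel]
  rw [eval_smul, ascPochhammer_nat_eq_natCast_ascFactorial, ← Nat.factorial_mul_multichoose, hfac,
    nsmul_eq_mul]
  push_cast
  ring

lemma natDegree_convFibPoly_le (j : ℕ) : (convFibPoly j).natDegree ≤ j :=
  natDegree_sum_le_of_forall_le _ _ fun p hp => (natDegree_smul_le _ _).trans
    ((ascPochhammer_natDegree ℤ p.1).trans_le (HasAntidiagonal.antidiagonal.fst_le hp))

lemma coeff_convFibPoly_self (j : ℕ) : (convFibPoly j).coeff j = 1 := by
  rw [convFibPoly, finsetSum_coeff, sum_eq_single_of_mem (j, 0) (by simp)]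
  · simp [coeff_ascPochhammer_self]
  · rintro ⟨a, b⟩ hab hne
    have : a < j := by simp at hab hne; omega
    rw [coeff_smul, coeff_ascPochhammer_of_lt this, smul_zero]

lemma two_mul_coeff_convFibPoly (n : ℕ) :
    2 * (convFibPoly (n + 1)).coeff n = 3 * (n + 1) * n := by
  rw [convFibPoly, sum_antidiagonal_succ', coeff_add, finsetSum_coeff,
    sum_eq_single_of_mem (n, 0) (by simp)]
  · simp only [coeff_smul, coeff_ascPochhammer_self, zero_add, Nat.choose_zero_right,
      Nat.descFactorial_zero, Nat.choose_one_right, Nat.descFactorial_one]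
    simp only [nsmul_eq_mul]
    push_cast
    linear_combination two_mul_coeff_ascPochhammer (S := ℤ) n
  · rintro ⟨a, b⟩ hab hne
    have : a < n := by simp at hab hne; omega
    rw [coeff_smul, coeff_ascPochhammer_of_lt this, smul_zero]

/-- Theorem (voorlaatste): for every `j ≥ 2` there is a monic polynomial
`A ∈ ℤ[X]` of degree `j` with `A(0) = 0` whose coefficient of `X^{j-1}` equals
`3 j (j-1) / 2`, such that `j! · F_{j+1}^{(r)} = A(r)` for every `r ≥ 1`. -/
theorem factorial_mul_convFib_eq_poly (j : ℕ) (hj : 2 ≤ j) :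
    ∃ A : Polynomial ℤ, A.Monic ∧ A.natDegree = j ∧ A.eval 0 = 0 ∧
      2 * A.coeff (j - 1) = 3 * j * (j - 1) ∧
      ∀ r : ℕ, 1 ≤ r → (Nat.factorial j : ℤ) * convFib r j = A.eval (r : ℤ) := by
  obtain ⟨n, rfl⟩ : ∃ n, j = n + 1 := ⟨j - 1, by omega⟩
  have hdeg : (convFibPoly (n + 1)).natDegree = n + 1 :=
    natDegree_eq_of_le_of_coeff_ne_zero (natDegree_convFibPoly_le _)
      (by simp [coeff_convFibPoly_self])
  refine ⟨convFibPoly (n + 1), ?_, hdeg, ?_, ?_, fun r _ => (eval_convFibPoly (n + 1) r).symm⟩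
  · rw [Monic, leadingCoeff, hdeg, coeff_convFibPoly_self]
  · simpa [convFib_zero_left] using eval_convFibPoly (n + 1) 0
  · simpa using two_mul_coeff_convFibPoly n
end

section
/- For all integers j ≥ 1 and r ≥ 1, F_{j+1}^{(r)} = Σ multinomial(r; n_1, …, n_j) · F_2^{n_1} · F_3^{n_2} ⋯ F_{j+1}^{n_j}, where the sum is over all tuples (n_1, …, n_j) of non-negative integers with Σ_{k=1}^j k·n_k = j, and multinomial(r; n_1, …, n_j) = r! / (n_1! n_2! ⋯ n_j! (r − n_1 − ⋯ − n_j)!) when n_1 + ⋯ + n_j ≤ r, and 0 otherwise. -/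
/-- `multinomGen r n = r! / (n_1! ⋯ n_j! (r - n_1 - ⋯ - n_j)!)` when
`n_1 + ⋯ + n_j ≤ r`, and `0` otherwise. -/
def multinomGen (r : ℕ) {j : ℕ} (n : Fin j → ℕ) : ℕ :=
  if (∑ k, n k) ≤ r then
    Nat.factorial r / ((∏ k, Nat.factorial (n k)) * Nat.factorial (r - ∑ k, n k))
  else 0

open Finset Polynomial

section Expansion

variable {R ι : Type*}

theorem coeff_sum_C_mul_X_pow [Semiring R] (S : Finset ι) (b : ι → R) (d : ι → ℕ) (m : ℕ) :
    (∑ x ∈ S, C (b x) * X ^ d x).coeff m = ∑ x ∈ S with d x = m, b x := by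
  simp only [finsetSum_coeff, coeff_C_mul_X_pow, sum_filter, eq_comm]

variable [CommSemiring R] (s : Finset ι) (a : ι → R) (e : ι → ℕ) (r m : ℕ)

theorem coeff_pow_sum_C_mul_X_pow_eq_sum_piFinset :
    ((∑ i ∈ s, C (a i) * X ^ e i) ^ r).coeff m =
      ∑ x ∈ Fintype.piFinset (fun _ : Fin r => s) with ∑ t, e (x t) = m, ∏ t, a (x t) := by
  rw [← Fin.prod_const, prod_univ_sum]
  simp only [prod_mul_distrib, ← map_prod, prod_pow_eq_pow_sum, coeff_sum_C_mul_X_pow]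

theorem coeff_pow_sum_C_mul_X_pow_eq_sum_piAntidiag [DecidableEq ι] :
    ((∑ i ∈ s, C (a i) * X ^ e i) ^ r).coeff m =
      ∑ k ∈ piAntidiag s r with ∑ i ∈ s, e i * k i = m,
        Nat.multinomial s k * ∏ i ∈ s, a i ^ k i := by
  simp only [sum_pow_eq_sum_piAntidiag, mul_pow, prod_mul_distrib, ← map_pow, ← map_prod,
    ← pow_mul, prod_pow_eq_pow_sum, ← map_natCast C, ← mul_assoc, ← map_mul,
    coeff_sum_C_mul_X_pow, mul_comm (e _)]

end Expansion

noncomputable def fibPoly (N : ℕ) : ℕ[X] :=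
  ∑ i ∈ range (N + 1), C (Nat.fib (i + 1)) * X ^ i

theorem convFib_eq_coeff_fibPoly_pow {r m N : ℕ} (h : m ≤ N) :
    convFib r m = ((fibPoly N) ^ r).coeff m := by
  rw [fibPoly, coeff_pow_sum_C_mul_X_pow_eq_sum_piFinset, convFib]
  congr 1
  ext t
  simp only [Nat.mem_antidiagonalTuple, mem_filter, Fintype.mem_piFinset, mem_range]
  refine ⟨fun ht => ⟨fun i => ?_, ht⟩, And.right⟩
  have := ht ▸ single_le_sum (fun i _ => Nat.zero_le (t i)) (mem_univ i)
  omega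

theorem multinomial_fin_cons_sub_sum {j r : ℕ} {n : Fin j → ℕ} (hn : ∑ k, n k ≤ r) :
    Nat.multinomial univ (Fin.cons (r - ∑ k, n k) n : Fin (j + 1) → ℕ) = multinomGen r n := by
  rw [Nat.multinomial, Fin.sum_univ_succ, Fin.prod_univ_succ, multinomGen, if_pos hn]
  simp only [Fin.cons_zero, Fin.cons_succ, Nat.sub_add_cancel hn, mul_comm]

theorem le_of_sum_succ_mul_eq {j : ℕ} {n : Fin j → ℕ} (hn : ∑ i, (i.1 + 1) * n i = j) (i : Fin j) :
    n i ≤ j :=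
  hn ▸ (Nat.le_mul_of_pos_left _ i.1.succ_pos).trans
    (single_le_sum (f := fun i : Fin j => (i.1 + 1) * n i) (fun _ _ => Nat.zero_le _) (mem_univ i))

theorem sum_val_mul_eq_sum_succ_mul_tail {j : ℕ} (k : Fin (j + 1) → ℕ) :
    ∑ i : Fin (j + 1), (i : ℕ) * k i = ∑ i : Fin j, (i.1 + 1) * Fin.tail k i := by
  simp [Fin.sum_univ_succ, Fin.tail]

theorem fin_cons_sub_sum_tail {j r : ℕ} {k : Fin (j + 1) → ℕ} (hk : ∑ i, k i = r) :
    Fin.cons (r - ∑ i, Fin.tail k i) (Fin.tail k) = k := by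
  rw [← hk, Fin.sum_univ_succ]
  exact (congrArg (Fin.cons · _) (Nat.add_sub_cancel _ _)).trans (Fin.cons_self_tail k)

theorem sum_piAntidiag_filter_eq_sum_fin_cons {M : Type*} [AddCommMonoid M] (r j : ℕ)
    (f : (Fin (j + 1) → ℕ) → M) :
    ∑ k ∈ piAntidiag univ r with ∑ i : Fin (j + 1), (i : ℕ) * k i = j, f k =
      ∑ n ∈ Fintype.piFinset (fun _ : Fin j => range (j + 1))
        with ∑ i, (i.1 + 1) * n i = j ∧ ∑ i, n i ≤ r, f (Fin.cons (r - ∑ i, n i) n) := by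
  have sum_eq {k}
      (hk : k ∈ (piAntidiag univ r).filter fun k => ∑ i : Fin (j + 1), (i : ℕ) * k i = j) :
      ∑ i, k i = r :=
    (mem_piAntidiag.1 (mem_filter.1 hk).1).1
  refine sum_nbij' Fin.tail (fun n => Fin.cons (r - ∑ i, n i) n) ?_ ?_
    (fun k hk => fin_cons_sub_sum_tail (sum_eq hk)) (fun _ _ => Fin.tail_cons _ _)
    (fun k hk => by rw [fin_cons_sub_sum_tail (sum_eq hk)])
  · intro k hk
    have hw := (mem_filter.1 hk).2
    rw [sum_val_mul_eq_sum_succ_mul_tail] at hw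
    refine mem_filter.2 ⟨Fintype.mem_piFinset.2 fun i => mem_range.2 ?_, hw, ?_⟩
    · exact Nat.lt_succ_of_le (le_of_sum_succ_mul_eq hw i)
    · rw [← sum_eq hk, Fin.sum_univ_succ]
      exact Nat.le_add_left _ _
  · intro n hn
    obtain ⟨-, hw, hle⟩ := mem_filter.1 hn
    rw [mem_filter, mem_piAntidiag, sum_val_mul_eq_sum_succ_mul_tail, Fin.tail_cons, Fin.sum_cons]
    exact ⟨⟨Nat.sub_add_cancel hle, fun i _ => mem_univ i⟩, hw⟩

theorem convFib_multinomial_general (j r : ℕ) :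
    convFib r j =
      ∑ n ∈ (Fintype.piFinset fun _ : Fin j => Finset.range (j + 1)).filter
          (fun n => ∑ k, (k.1 + 1) * n k = j),
        multinomGen r n * ∏ k, Nat.fib (k.1 + 2) ^ n k := by
  calc convFib r j = ((fibPoly j) ^ r).coeff j := convFib_eq_coeff_fibPoly_pow le_rfl
    _ = ∑ k ∈ piAntidiag univ r with ∑ i : Fin (j + 1), (i : ℕ) * k i = j,
          Nat.multinomial univ k * ∏ i : Fin (j + 1), Nat.fib (i + 1) ^ k i := by
      rw [fibPoly, ← Fin.sum_univ_eq_sum_range (fun i => C (Nat.fib (i + 1)) * X ^ i),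
        coeff_pow_sum_C_mul_X_pow_eq_sum_piAntidiag]
      simp only [Nat.cast_id]
    _ = ∑ n ∈ Fintype.piFinset (fun _ : Fin j => range (j + 1))
          with ∑ i, (i.1 + 1) * n i = j ∧ ∑ i, n i ≤ r,
          multinomGen r n * ∏ i : Fin j, Nat.fib (i + 2) ^ n i := by
      rw [sum_piAntidiag_filter_eq_sum_fin_cons]
      refine sum_congr rfl fun n hn => ?_
      rw [multinomial_fin_cons_sub_sum (mem_filter.1 hn).2.2, Fin.prod_univ_succ]
      simp
    _ = _ := by
      rw [← filter_filter]
      exact sum_filter_of_ne fun n _ h => by_contra fun hn => left_ne_zero_of_mul h (if_neg hn)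

/-- The multinomial expansion: for `j, r ≥ 1`,
`F_{j+1}^{(r)} = ∑_{∑ k n_k = j} multinomial(r; n_1, …, n_j) F_2^{n_1} ⋯ F_{j+1}^{n_j}`,
the sum over all tuples `(n_1, …, n_j)` of non-negative integers with
`∑_{k=1}^j k n_k = j` (all of which satisfy `n_k ≤ j`). -/
theorem convFib_multinomial (j r : ℕ) (hj : 1 ≤ j) (hr : 1 ≤ r) :
    convFib r j =
      ∑ n ∈ (Fintype.piFinset fun _ : Fin j => Finset.range (j + 1)).filter
          (fun n => ∑ k, (k.1 + 1) * n k = j),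
        multinomGen r n * ∏ k, Nat.fib (k.1 + 2) ^ n k :=
  convFib_multinomial_general j r
end

section
/- Let r ≥ 1 and let n_1, …, n_r be non-negative integers with n = n_1 + ⋯ + n_r ≥ 1. Then n!/(n_1! ⋯ n_r!) = Σ_{d | gcd(n_1, …, n_r)} (n/d) · M(n_1/d, n_2/d, …, n_r/d), where M is defined by M(m_1, …, m_r) = (1/m) Σ_{d | gcd(m_1, …, m_r)} μ(d) · (m/d)! / ((m_1/d)! ⋯ (m_r/d)!) with m = m_1 + ⋯ + m_r. -/
/-!
Write `g = gcd(n_1, …, n_r)` and `C(m) = (n/m)! / ∏ (n_i/m)!`. Since `gcd(n_i/d) = g/d`, the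
`d`-th summand on the right is `∑_{e ∣ g/d} μ(e) C(de)`; collecting terms by `m = de` gives
`∑_{m ∣ g} C(m) ∑_{e ∣ m} μ(e) = C(1)`, which is Möbius inversion.
-/

/-- `Mword n = M(n_1, …, n_k) = (1/n) ∑_{d ∣ gcd(n_1,…,n_k)} μ(d) (n/d)! / ((n_1/d)!⋯(n_k/d)!)`
with `n = n_1 + ⋯ + n_k` (equal to `0` when all `n_i` vanish). -/
noncomputable def Mword {k : ℕ} (n : Fin k → ℕ) : ℚ :=
  (1 / ((∑ i, n i : ℕ) : ℚ)) * ∑ d ∈ (Finset.univ.gcd n).divisors,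
    ((ArithmeticFunction.moebius d : ℤ) : ℚ) *
      (Nat.factorial ((∑ i, n i) / d) : ℚ) / ∏ i, (Nat.factorial (n i / d) : ℚ)

open Finset ArithmeticFunction
open scoped Nat ArithmeticFunction.Moebius

theorem Finset.gcd_div_of_dvd {ι : Type*} {s : Finset ι} {f : ι → ℕ} {d : ℕ}
    (hd : ∀ i ∈ s, d ∣ f i) : s.gcd (fun i => f i / d) = s.gcd f / d := by
  rcases Nat.eq_zero_or_pos d with rfl | hd0
  · simp [gcd_eq_zero_iff]
  have : s.gcd f = d * s.gcd (fun i => f i / d) := by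
    rw [← normalize_eq d, ← gcd_mul_left, normalize_eq]
    exact gcd_congr rfl fun i hi => (Nat.mul_div_cancel' (hd i hi)).symm
  rw [this, Nat.mul_div_cancel_left _ hd0]

theorem Nat.cast_multinomial {α K : Type*} [Field K] [CharZero K] (s : Finset α) (f : α → ℕ) :
    (multinomial s f : K) = (∑ i ∈ s, f i)! / ∏ i ∈ s, ((f i)! : K) := by
  rw [eq_div_iff (prod_ne_zero_iff.2 fun i _ => Nat.cast_ne_zero.2 (factorial_ne_zero _)),
    mul_comm]
  exact_mod_cast multinomial_spec s f

theorem sum_divisors_sum_moebius_mul {R : Type*} [NonAssocRing R] (F : ℕ → R) {g : ℕ}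
    (hg : g ≠ 0) :
    ∑ d ∈ g.divisors, ∑ e ∈ (g / d).divisors, (μ e : R) * F (d * e) = F 1 := by
  have inversion := (sum_eq_iff_sum_mul_moebius_eq
    (f := fun k => ∑ x ∈ k.divisorsAntidiagonal, (μ x.1 : R) * F (g / x.2))
    (g := fun c => F (g / c))).mpr (fun _ _ => rfl) g (Nat.pos_of_ne_zero hg)
  rw [Nat.div_self (Nat.pos_of_ne_zero hg), ← Nat.sum_div_divisors] at inversion
  rw [← inversion]
  refine sum_congr rfl fun d hd => ?_
  rw [Nat.sum_divisorsAntidiagonal (fun e c => (μ e : R) * F (g / c))]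
  refine sum_congr rfl fun e he => ?_
  have hde : d * e ∣ g :=
    Nat.mul_dvd_of_dvd_div (Nat.dvd_of_mem_divisors hd) (Nat.dvd_of_mem_divisors he)
  rw [Nat.div_div_eq_div_mul, Nat.div_div_self hde hg]

theorem sum_mul_Mword {k : ℕ} (m : Fin k → ℕ) :
    ((∑ i, m i : ℕ) : ℚ) * Mword m =
      ∑ e ∈ (univ.gcd m).divisors, (μ e : ℚ) * Nat.multinomial univ (fun i => m i / e) := by
  rcases eq_or_ne (∑ i, m i) 0 with hm | hm
  · have : univ.gcd m = 0 := gcd_eq_zero_iff.2 fun i _ => sum_eq_zero_iff.1 hm i (mem_univ i)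
    simp [hm, this]
  rw [Mword, ← mul_assoc, mul_one_div_cancel (by exact_mod_cast hm), one_mul]
  refine sum_congr rfl fun e he => ?_
  rw [Nat.cast_multinomial, Nat.sum_div fun i _ => (Nat.dvd_of_mem_divisors he).trans
    (gcd_dvd (mem_univ i)), mul_div_assoc]

/-- Equation (witty): for `r + 1 ≥ 1` non-negative integers `n_0, …, n_r` with
`n = n_0 + ⋯ + n_r ≥ 1`,
`n!/(n_0! ⋯ n_r!) = ∑_{d ∣ gcd(n_0,…,n_r)} (n/d) M(n_0/d, …, n_r/d)`. -/
theorem multinomial_eq_sum_Mword (r : ℕ) (n : Fin (r + 1) → ℕ) (h : 1 ≤ ∑ i, n i) :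
    ((Nat.factorial (∑ i, n i) : ℚ) / ∏ i, (Nat.factorial (n i) : ℚ)) =
      ∑ d ∈ (Finset.univ.gcd n).divisors,
        (((∑ i, n i) / d : ℕ) : ℚ) * Mword (fun i => n i / d) := by
  set g := univ.gcd n
  have hg : g ≠ 0 := fun hg => by
    have : ∑ i, n i = 0 := sum_eq_zero fun i hi => Finset.gcd_eq_zero_iff.1 hg i hi
    omega
  have hdvd : ∀ d ∈ g.divisors, ∀ i ∈ univ, d ∣ n i := fun d hd i hi =>
    (Nat.dvd_of_mem_divisors hd).trans (gcd_dvd hi)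
  calc ((∑ i, n i)! : ℚ) / ∏ i, ((n i)! : ℚ)
      = Nat.multinomial univ (fun i => n i / 1) := by simp [Nat.cast_multinomial]
    _ = ∑ d ∈ g.divisors, ∑ e ∈ (g / d).divisors,
          (μ e : ℚ) * Nat.multinomial univ (fun i => n i / (d * e)) :=
      (sum_divisors_sum_moebius_mul (fun m => (Nat.multinomial univ (n · / m) : ℚ)) hg).symm
    _ = _ := sum_congr rfl fun d hd => by
      rw [Nat.sum_div (hdvd d hd), sum_mul_Mword, gcd_div_of_dvd (hdvd d hd)]
      simp only [Nat.div_div_eq_div_mul]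
      rfl
end
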